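/- Fix 𝔠 > 0. Define K_α(z) := ∫₀^∞ e^{−z cosh t} cosh(αt) dt for z > 0, a₁(z) := K₃(z)/K₂(z), a₂(z) := −a₁(z)² + 6a₁(z)/z + 1, a₃(z) := −a₁(z)³ + 6a₁(z)²/z − 6a₁(z)/z² + a₁(z) − 1/z, and set c_∞(z) := √( (𝔠²/z)·(z·a₂(z) − a₁(z))/(z·a₃(z)) ) and ĉ(z) := c_∞(z)·𝔠/√(𝔠² + c_∞(z)²). Then lim_{z→0⁺} ĉ(z)/𝔠 = 1/√3; equivalently, lim_{z→0⁺} (z·a₂(z) − a₁(z)) / (z²·a₃(z)) = 1/2. -/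

import Mathlib

open MeasureTheory Filter

/-- The modified Bessel function K_α(z) = ∫₀^∞ e^{−z cosh t} cosh(αt) dt. -/
noncomputable def Kb (α z : ℝ) : ℝ :=
  ∫ t in Set.Ioi (0 : ℝ), Real.exp (-z * Real.cosh t) * Real.cosh (α * t)

noncomputable def aOne (z : ℝ) : ℝ := Kb 3 z / Kb 2 z

noncomputable def aTwo (z : ℝ) : ℝ := -aOne z ^ 2 + 6 * aOne z / z + 1

noncomputable def aThree (z : ℝ) : ℝ :=
  -aOne z ^ 3 + 6 * aOne z ^ 2 / z - 6 * aOne z / z ^ 2 + aOne z - 1 / z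

/-- The sound speed c_∞(z) = √((c²/z)(za₂ − a₁)/(za₃)). -/
noncomputable def cInf (c z : ℝ) : ℝ :=
  Real.sqrt ((c ^ 2 / z) * (z * aTwo z - aOne z) / (z * aThree z))

/-- The relativistic sound speed ĉ(z) = c_∞(z)·c/√(c² + c_∞(z)²). -/
noncomputable def cHat (c z : ℝ) : ℝ := cInf c z * c / Real.sqrt (c ^ 2 + cInf c z ^ 2)

/-!
Integrating the derivative of `e^{-z cosh t} sinh νt` over `(0, ∞)` gives the recurrence
`z K_{ν+1} = z K_{ν-1} + 2ν K_ν`; at `ν = 2` it reads `z a₁(z) = 4 + z K₁(z)/K₂(z)`, and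
`0 < K₁ ≤ K₂` forces `z a₁(z) → 4` as `z → 0⁺`. After multiplying numerator and denominator
by `z`, the ratio `r = (z a₂ − a₁)/(z² a₃)` is a rational function of `s = z a₁` and `z` whose
value at `(4, 0)` is `4/8 = 1/2`. Finally `(ĉ/𝔠)² = r/(1 + r) → 1/3`.
-/

open Real Set Topology

lemma Real.cosh_le_exp_abs (x : ℝ) : cosh x ≤ exp |x| := by
  rw [← cosh_abs, cosh_eq]
  linarith [exp_le_exp.mpr (neg_le_self (abs_nonneg x))]

lemma Real.abs_sinh_le_cosh (x : ℝ) : |sinh x| ≤ cosh x := by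
  have h := sinh_lt_cosh (-x)
  rw [sinh_neg, cosh_neg] at h
  exact abs_le.mpr ⟨by linarith, (sinh_lt_cosh x).le⟩

lemma Real.one_add_sq_div_two_le_cosh (x : ℝ) : 1 + x ^ 2 / 2 ≤ cosh x := by
  have h_half : (|x| / 2) ^ 2 ≤ sinh (|x| / 2) ^ 2 :=
    pow_le_pow_left₀ (by positivity) (self_le_sinh_iff.mpr (by positivity)) 2
  have h_double : cosh |x| = 1 + 2 * sinh (|x| / 2) ^ 2 := by
    conv_lhs => rw [show |x| = 2 * (|x| / 2) by ring, cosh_two_mul, cosh_sq]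
    ring
  rw [← cosh_abs, h_double, ← sq_abs x]
  linarith

section BesselIntegrand

variable {z : ℝ}

lemma exp_neg_mul_cosh_mul_cosh_le (hz : 0 < z) (α : ℝ) {t : ℝ} (ht : 0 ≤ t) :
    exp (-z * cosh t) * cosh (α * t) ≤ exp ((|α| + 1) ^ 2 / (2 * z)) * exp (-1 * t) := by
  have h_quad : (|α| + 1) * t - z * (1 + t ^ 2 / 2) ≤ (|α| + 1) ^ 2 / (2 * z) := by
    rw [le_div_iff₀ (by positivity)]
    nlinarith [sq_nonneg (z * t - (|α| + 1))]
  calc exp (-z * cosh t) * cosh (α * t)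
      ≤ exp (-z * (1 + t ^ 2 / 2)) * exp (|α| * t) := by
        refine mul_le_mul (exp_le_exp.mpr ?_) ?_ (by positivity) (by positivity)
        · exact mul_le_mul_of_nonpos_left (one_add_sq_div_two_le_cosh t) (by linarith)
        · simpa [abs_mul, abs_of_nonneg ht] using cosh_le_exp_abs (α * t)
    _ = exp ((|α| + 1) * t - z * (1 + t ^ 2 / 2)) * exp (-1 * t) := by
        rw [← exp_add, ← exp_add]; ring_nf
    _ ≤ exp ((|α| + 1) ^ 2 / (2 * z)) * exp (-1 * t) := by gcongr

lemma integrableOn_exp_neg_mul_cosh_mul_cosh (hz : 0 < z) (α : ℝ) :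
    IntegrableOn (fun t => exp (-z * cosh t) * cosh (α * t)) (Ioi 0) := by
  refine ((exp_neg_integrableOn_Ioi 0 one_pos).const_mul
    (exp ((|α| + 1) ^ 2 / (2 * z)))).mono' (by fun_prop) ?_
  filter_upwards [ae_restrict_mem measurableSet_Ioi] with t ht
  rw [norm_of_nonneg (by positivity)]
  exact exp_neg_mul_cosh_mul_cosh_le hz α (le_of_lt ht)

lemma Kb_pos (hz : 0 < z) (α : ℝ) : 0 < Kb α z := by
  rw [Kb, setIntegral_pos_iff_support_of_nonneg_ae (.of_forall fun t => by positivity)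
    (integrableOn_exp_neg_mul_cosh_mul_cosh hz α)]
  have h_support : Function.support (fun t => exp (-z * cosh t) * cosh (α * t)) = univ :=
    eq_univ_of_forall fun t => Function.mem_support.mpr (by positivity)
  rw [h_support, univ_inter, volume_Ioi]
  exact ENNReal.zero_lt_top

lemma Kb_le_Kb (hz : 0 < z) {α β : ℝ} (h : |α| ≤ |β|) : Kb α z ≤ Kb β z := by
  refine setIntegral_mono_on (integrableOn_exp_neg_mul_cosh_mul_cosh hz α)
    (integrableOn_exp_neg_mul_cosh_mul_cosh hz β) measurableSet_Ioi fun t ht => ?_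
  gcongr
  rw [cosh_le_cosh, abs_mul, abs_mul]
  gcongr

lemma hasDerivAt_exp_neg_mul_cosh_mul_sinh (ν t : ℝ) :
    HasDerivAt (fun t => exp (-z * cosh t) * sinh (ν * t))
      (ν * (exp (-z * cosh t) * cosh (ν * t)) - z / 2 * (exp (-z * cosh t) * cosh ((ν + 1) * t))
        + z / 2 * (exp (-z * cosh t) * cosh ((ν - 1) * t))) t := by
  have h := (((hasDerivAt_cosh t).const_mul (-z)).exp).mul
    ((hasDerivAt_sinh (ν * t)).comp t ((hasDerivAt_id t).const_mul ν))
  refine h.congr_deriv ?_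
  simp only [Function.comp_apply, add_mul, sub_mul, one_mul, mul_one, cosh_add, cosh_sub]
  ring

lemma mul_Kb_add_one (hz : 0 < z) (ν : ℝ) :
    z * Kb (ν + 1) z = z * Kb (ν - 1) z + 2 * ν * Kb ν z := by
  have hint := integrableOn_exp_neg_mul_cosh_mul_cosh hz
  have hderiv_int := (((hint ν).const_mul ν).sub ((hint (ν + 1)).const_mul (z / 2))).add
    ((hint (ν - 1)).const_mul (z / 2))
  have hf_int : IntegrableOn (fun t => exp (-z * cosh t) * sinh (ν * t)) (Ioi 0) := by
    refine (hint ν).mono' (by fun_prop) (.of_forall fun t => ?_)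
    rw [norm_mul, norm_of_nonneg (exp_pos _).le, norm_eq_abs]
    gcongr
    exact abs_sinh_le_cosh _
  have h_lim := tendsto_zero_of_hasDerivAt_of_integrableOn_Ioi
    (fun t _ => hasDerivAt_exp_neg_mul_cosh_mul_sinh ν t) hderiv_int hf_int
  have h_eq := integral_Ioi_of_hasDerivAt_of_tendsto'
    (fun t _ => hasDerivAt_exp_neg_mul_cosh_mul_sinh ν t) hderiv_int h_lim
  rw [integral_add ?_ ((hint (ν - 1)).const_mul _), integral_sub ((hint ν).const_mul _)
      ((hint (ν + 1)).const_mul _), integral_const_mul, integral_const_mul,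
    integral_const_mul] at h_eq
  · change ν * Kb ν z - z / 2 * Kb (ν + 1) z + z / 2 * Kb (ν - 1) z = 0 - _ at h_eq
    simp only [mul_zero, sinh_zero, sub_zero] at h_eq
    linarith
  · exact ((hint ν).const_mul _).sub ((hint (ν + 1)).const_mul _)

end BesselIntegrand

lemma mul_aOne_eq {z : ℝ} (hz : 0 < z) : z * aOne z = 4 + z * (Kb 1 z / Kb 2 z) := by
  have h := mul_Kb_add_one hz 2
  norm_num at h
  have h_ne := (Kb_pos hz 2).ne'
  rw [aOne, mul_div_assoc', h]
  field_simp
  ring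

lemma tendsto_mul_aOne : Tendsto (fun z => z * aOne z) (𝓝[>] 0) (𝓝 4) := by
  have h_bounds : ∀ z ∈ Ioi (0 : ℝ),
      0 ≤ z * (Kb 1 z / Kb 2 z) ∧ z * (Kb 1 z / Kb 2 z) ≤ z :=
    fun z hz => ⟨mul_nonneg (le_of_lt hz) (div_nonneg (Kb_pos hz 1).le (Kb_pos hz 2).le),
      mul_le_of_le_one_right (le_of_lt hz)
        ((div_le_one (Kb_pos hz 2)).mpr (Kb_le_Kb hz (by norm_num)))⟩
  have h_rest : Tendsto (fun z => z * (Kb 1 z / Kb 2 z)) (𝓝[>] 0) (𝓝 0) :=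
    squeeze_zero' (eventually_nhdsWithin_of_forall fun z hz => (h_bounds z hz).1)
      (eventually_nhdsWithin_of_forall fun z hz => (h_bounds z hz).2)
      (tendsto_nhdsWithin_of_tendsto_nhds tendsto_id)
  have h := h_rest.const_add 4
  rw [add_zero] at h
  exact h.congr' (eventually_nhdsWithin_of_forall fun z hz => (mul_aOne_eq hz).symm)

noncomputable def soundSpeedRatio (z : ℝ) : ℝ := (z * aTwo z - aOne z) / (z ^ 2 * aThree z)

lemma soundSpeedRatio_eq {z s : ℝ} (hz : z ≠ 0) (hs : z * aOne z = s) :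
    soundSpeedRatio z =
      (-s ^ 2 + 5 * s + z ^ 2) / (-s ^ 3 + 6 * s ^ 2 - 6 * s + z ^ 2 * s - z ^ 2) := by
  subst hs
  rw [soundSpeedRatio, ← mul_div_mul_left _ _ hz, aTwo, aThree]
  field_simp
  ring

lemma tendsto_soundSpeedRatio : Tendsto soundSpeedRatio (𝓝[>] 0) (𝓝 (1 / 2)) := by
  have h_cont : ContinuousAt (fun p : ℝ × ℝ => (-p.1 ^ 2 + 5 * p.1 + p.2 ^ 2) /
      (-p.1 ^ 3 + 6 * p.1 ^ 2 - 6 * p.1 + p.2 ^ 2 * p.1 - p.2 ^ 2)) (4, 0) := by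
    fun_prop (disch := norm_num)
  have h := h_cont.tendsto.comp
    (tendsto_mul_aOne.prodMk_nhds (tendsto_nhdsWithin_of_tendsto_nhds tendsto_id))
  norm_num at h
  exact h.congr' (eventually_nhdsWithin_of_forall fun z hz => (soundSpeedRatio_eq hz.ne' rfl).symm)

lemma cInf_eq (c z : ℝ) : cInf c z = |c| * √(soundSpeedRatio z) := by
  rw [cInf, show c ^ 2 / z * (z * aTwo z - aOne z) / (z * aThree z) = c ^ 2 * soundSpeedRatio z by
    rw [soundSpeedRatio]; ring, sqrt_mul (sq_nonneg c), sqrt_sq_eq_abs]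

lemma cHat_div_eq {c z : ℝ} (hc : c ≠ 0) (hr : 0 ≤ soundSpeedRatio z) :
    cHat c z / c = √(soundSpeedRatio z / (1 + soundSpeedRatio z)) := by
  have h_sum : c ^ 2 + cInf c z ^ 2 = c ^ 2 * (1 + soundSpeedRatio z) := by
    rw [cInf_eq, mul_pow, sq_abs, sq_sqrt hr]
    ring
  have h_pos : 0 < √(1 + soundSpeedRatio z) := sqrt_pos.mpr (by linarith)
  have h_abs : 0 < |c| := abs_pos.mpr hc
  rw [cHat, h_sum, sqrt_mul (sq_nonneg c), sqrt_sq_eq_abs, cInf_eq, sqrt_div hr]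
  field_simp

/-- The ultrarelativistic limit: ĉ(z)/c → 1/√3 as z → 0⁺; equivalently,
(za₂(z) − a₁(z))/(z²a₃(z)) → 1/2 as z → 0⁺. -/
theorem sound_speed_ultrarelativistic_limit (c : ℝ) (hc : 0 < c) :
    Tendsto (fun z : ℝ => cHat c z / c) (nhdsWithin 0 (Set.Ioi 0))
      (nhds (1 / Real.sqrt 3)) ∧
    Tendsto (fun z : ℝ => (z * aTwo z - aOne z) / (z ^ 2 * aThree z))
      (nhdsWithin 0 (Set.Ioi 0)) (nhds (1 / 2)) := by
  refine ⟨?_, tendsto_soundSpeedRatio⟩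
  have h_lim : Tendsto (fun z => √(soundSpeedRatio z / (1 + soundSpeedRatio z))) (𝓝[>] 0)
      (𝓝 (1 / √3)) := by
    have h := (tendsto_soundSpeedRatio.div (tendsto_soundSpeedRatio.const_add 1)
      (by norm_num)).sqrt
    rwa [show (1 / 2 : ℝ) / (1 + 1 / 2) = 3⁻¹ by norm_num, sqrt_inv, ← one_div] at h
  refine h_lim.congr' ?_
  filter_upwards [tendsto_soundSpeedRatio.eventually_const_le (by norm_num : (0 : ℝ) < 1 / 2)]
    with z hr
  exact (cHat_div_eq hc.ne' hr).symm
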